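/- arXiv:2312.10413 — 2 statements merged into one kernel-verified Lean document; each statement's English description precedes it below -/
import Mathlib

section
/- Every self-complementary split graph whose clique part and independent part each contain at least two vertices admits a diamond partition. Moreover, if a self-complementary split graph G has order 4k with k >= 1, then G admits a diamond partition {V1, V2, V3, V4} that is self-complementary, i.e., there is an antimorphism sigma of G with sigma(V1) = V2, sigma(V2) = V3, sigma(V3) = V4, and sigma(V4) = V1. -/
open SimpleGraph

/-- The degree of a vertex, as the cardinality of its neighbor set. -/
noncomputable def deg {V : Type*} (G : SimpleGraph V) (v : V) : ℕ := (G.neighborSet v).ncard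

/-- The degree sequence of a finite graph, as a multiset (which determines the
non-increasing sequence of vertex degrees). -/
noncomputable def degMultiset {V : Type*} [Finite V] (G : SimpleGraph V) : Multiset ℕ :=
  letI := Fintype.ofFinite V
  Finset.univ.val.map fun v => deg G v

/-- A graph is self-complementary if it is isomorphic to its complement. -/
def IsSelfCompl {V : Type*} (G : SimpleGraph V) : Prop := Nonempty (G ≃g Gᶜ)

/-- A degree sequence is forcibly self-complementary if every realization of it
is self-complementary. -/
def ForciblySC (τ : Multiset ℕ) : Prop :=
  ∀ G : SimpleGraph (Fin (Multiset.card τ)), degMultiset G = τ → IsSelfCompl G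

/-- A split partition: a partition of the vertex set into a clique `K` and an
independent set `I`. -/
def IsSplitPartition {V : Type*} (G : SimpleGraph V) (K I : Set V) : Prop :=
  Disjoint K I ∧ K ∪ I = Set.univ ∧ G.IsClique K ∧ ∀ u ∈ I, ∀ v ∈ I, ¬ G.Adj u v

/-- A split graph: a graph admitting a split partition. -/
def IsSplit {V : Type*} (G : SimpleGraph V) : Prop := ∃ K I, IsSplitPartition G K I

/-- A diamond partition: a partition of the vertex set into four nonempty parts such
that `V1` is complete to `V3` and `V2` is nonadjacent to `V4`. -/
def IsDiamondPartition {V : Type*} (G : SimpleGraph V) (V1 V2 V3 V4 : Set V) : Prop :=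
  V1.Nonempty ∧ V2.Nonempty ∧ V3.Nonempty ∧ V4.Nonempty ∧
  Disjoint V1 V2 ∧ Disjoint V1 V3 ∧ Disjoint V1 V4 ∧
  Disjoint V2 V3 ∧ Disjoint V2 V4 ∧ Disjoint V3 V4 ∧
  V1 ∪ V2 ∪ V3 ∪ V4 = Set.univ ∧
  (∀ u ∈ V1, ∀ v ∈ V3, G.Adj u v) ∧ (∀ u ∈ V2, ∀ v ∈ V4, ¬ G.Adj u v)

/-!
An antimorphism `σ` maps the clique `K` onto an independent set and `I` onto a clique, and an
independent set meets `K` in at most one vertex, so `|K| ≤ |I| + 1` and `|I| ≤ |K| + 1`; on `4k`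
vertices both parts have `2k` vertices. Then `σ K = I`: otherwise some `u ∈ K` and `w ∈ I` stay on
their sides while all other vertices switch sides, and according to whether `uw` is an edge,
`w` can be moved into the clique or `u` into the independent set, giving a split partition with
parts of sizes `2k + 1` and `2k - 1`. So `τ = σ²` preserves `K`, and every cycle of `τ` has even
length: if `σ^(2n) x = x` with `n` odd, then `σⁿ` is an antimorphism swapping `x` and `σⁿ x`.
Colouring the cycles of `τ` alternately gives `A ⊆ K` with `τ A = K \ A`, and `A`, `σ A`, `K \ A`,
`I \ σ A` is a diamond partition cycled by `σ`.
-/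

theorem Nat.iff_even_iff_of_succ_iff_not {p : ℕ → Prop} (h : ∀ n, p (n + 1) ↔ ¬ p n)
    (n : ℕ) : p n ↔ (Even n ↔ p 0) := by
  induction n with
  | zero => simp
  | succ n ih => rw [h, ih, Nat.even_add_one]; tauto

theorem IsCompl.image_eq_of_image_eq {α : Type*} {K I : Set α} (hKI : IsCompl K I) {f : α → α}
    (hf : Function.Bijective f) (h : f '' K = I) : f '' I = K := by
  rw [← hKI.compl_eq, Set.image_compl_eq hf, h, hKI.symm.compl_eq]

theorem Equiv.Perm.exists_image_eq_compl {α : Type*} [Finite α] (τ : Equiv.Perm α)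
    (h : ∀ x n, (τ ^ n) x = x → Even n) : ∃ S : Set α, τ '' S = Sᶜ := by
  have hpar : ∀ x a b, (τ ^ a) x = (τ ^ b) x → (Even a ↔ Even b) := by
    intro x a b hab
    wlog hle : a ≤ b generalizing a b
    · exact (this b a hab.symm (by omega)).symm
    have hfix : (τ ^ (b - a)) x = x := (τ ^ a).injective <| by
      rw [← Equiv.Perm.mul_apply, ← pow_add, Nat.add_sub_cancel' hle, hab]
    exact ((Nat.even_sub hle).mp (h x _ hfix)).symm
  obtain ⟨rep, hrep, hrepτ⟩ : ∃ rep : α → α, (∀ x, τ.SameCycle (rep x) x) ∧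
      ∀ x, rep (τ x) = rep x :=
    ⟨fun x => (⟦x⟧ : Quotient (SameCycle.setoid τ)).out,
      fun x => Quotient.mk_out (s := SameCycle.setoid τ) x, fun x =>
      congrArg Quotient.out (Quotient.sound (sameCycle_apply_left.mpr (SameCycle.refl τ x)))⟩
  -- `d x` is a distance from the representative of the cycle of `x`; since all cycles have even
  -- length, its parity does not depend on the choice.
  choose d hd using fun x => (hrep x).exists_nat_pow_eq
  have hflip : ∀ x, Even (d (τ x)) ↔ ¬ Even (d x) := fun x => by
    rw [← Nat.even_add_one]
    refine hpar (rep x) _ _ ?_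
    rw [pow_succ', Equiv.Perm.mul_apply, hd x, ← hrepτ x]
    exact hd (τ x)
  refine ⟨{x | Even (d x)}, Set.ext fun y => ?_⟩
  obtain ⟨x, rfl⟩ := τ.surjective y
  simp [hflip]

namespace SimpleGraph

variable {V W : Type*} {G : SimpleGraph V} {H : SimpleGraph W}

def Iso.compl (σ : G ≃g H) : Gᶜ ≃g Hᶜ where
  toEquiv := σ.toEquiv
  map_rel_iff' := by simp [compl_adj, σ.injective.ne_iff, σ.map_adj_iff]

namespace Iso

variable (σ : G ≃g Gᶜ)

theorem adj_apply_iff_not_adj {a b : V} (h : a ≠ b) : G.Adj (σ a) (σ b) ↔ ¬ G.Adj a b := by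
  have := σ.map_adj_iff (v := a) (w := b)
  rw [compl_adj, and_iff_right (σ.injective.ne h)] at this
  tauto

theorem adj_pow_apply_iff {a b : V} (h : a ≠ b) (n : ℕ) :
    G.Adj ((σ.toEquiv ^ n) a) ((σ.toEquiv ^ n) b) ↔ (Even n ↔ G.Adj a b) := by
  refine Nat.iff_even_iff_of_succ_iff_not
    (p := fun m => G.Adj ((σ.toEquiv ^ m) a) ((σ.toEquiv ^ m) b)) (fun m => ?_) n
  simp only [pow_succ', Equiv.Perm.mul_apply]
  exact σ.adj_apply_iff_not_adj ((σ.toEquiv ^ m).injective.ne h)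

theorem isIndepSet_image {s : Set V} (hs : G.IsClique s) : G.IsIndepSet (σ '' s) := by
  rintro _ ⟨a, ha, rfl⟩ _ ⟨b, hb, rfl⟩ hab
  have hab : a ≠ b := ne_of_apply_ne σ hab
  exact (σ.adj_apply_iff_not_adj hab).not_left.mpr (hs ha hb hab)

theorem even_of_pow_apply_eq {x : V} {n : ℕ} (hx : (σ.toEquiv ^ (2 * n)) x = x)
    (hne : (σ.toEquiv ^ n) x ≠ x) : Even n := by
  have hback : (σ.toEquiv ^ n) ((σ.toEquiv ^ n) x) = x := by
    rw [← Equiv.Perm.mul_apply, ← pow_add, ← two_mul, hx]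
  have := σ.adj_pow_apply_iff hne n
  rw [hback, adj_comm] at this
  tauto

end Iso

end SimpleGraph

namespace IsSplitPartition

variable {V : Type*} {G : SimpleGraph V} {K I : Set V}

theorem isCompl (h : IsSplitPartition G K I) : IsCompl K I :=
  ⟨h.1, codisjoint_iff.mpr h.2.1⟩

theorem isIndepSet (h : IsSplitPartition G K I) : G.IsIndepSet I :=
  fun u hu v hv _ => h.2.2.2 u hu v hv

theorem compl (h : IsSplitPartition G K I) : IsSplitPartition Gᶜ I K :=
  ⟨h.1.symm, by rw [Set.union_comm, h.2.1], by rw [isClique_compl]; exact h.isIndepSet,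
    fun u hu v hv ⟨huv, hnadj⟩ => hnadj (h.2.2.1 hu hv huv)⟩

theorem notMem_left_iff (h : IsSplitPartition G K I) {x : V} : x ∉ K ↔ x ∈ I := by
  rw [← h.isCompl.compl_eq]; rfl

theorem insert_sdiff (h : IsSplitPartition G K I) {w : V} (hc : G.IsClique (insert w K)) :
    IsSplitPartition G (insert w K) (I \ {w}) := by
  refine ⟨Set.disjoint_insert_left.mpr ⟨fun hw => hw.2 rfl, h.1.mono_right Set.sdiff_subset⟩,
    Set.eq_univ_of_forall fun x => ?_, hc, fun u hu v hv => h.2.2.2 u hu.1 v hv.1⟩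
  by_cases hxw : x = w
  · exact Or.inl (Or.inl hxw)
  by_cases hxK : x ∈ K
  · exact Or.inl (Or.inr hxK)
  · exact Or.inr ⟨h.notMem_left_iff.mp hxK, hxw⟩

theorem isClique_insert_of_apply_mem (h : IsSplitPartition G K I) (σ : G ≃g Gᶜ) {u w : V}
    (hσw : σ w ∈ I) (hσK : ∀ x ∈ K, x ≠ u → σ x ∈ I) (huw : G.Adj u w) :
    G.IsClique (insert w K) := by
  refine h.2.2.1.insert fun x hx hwx => ?_
  obtain rfl | hxu := eq_or_ne x u
  · exact huw.symm
  · exact (σ.adj_apply_iff_not_adj hwx).not_left.mp (h.2.2.2 _ hσw _ (hσK x hx hxu))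

theorem apply_mem_iff (h : IsSplitPartition G K I) (σ : G ≃g Gᶜ) (hK : σ '' K = I) (y : V) :
    σ y ∈ K ↔ y ∉ K := by
  rw [h.notMem_left_iff, ← h.isCompl.image_eq_of_image_eq σ.bijective hK,
    σ.injective.mem_set_image]

theorem even_of_sq_pow_apply_eq (h : IsSplitPartition G K I) (σ : G ≃g Gᶜ) (hK : σ '' K = I)
    {x : V} {n : ℕ} (hx : ((σ.toEquiv ^ 2) ^ n) x = x) : Even n := by
  by_cases hfix : (σ.toEquiv ^ n) x = x
  · have := Nat.iff_even_iff_of_succ_iff_not (p := fun m => (σ.toEquiv ^ m) x ∈ K) (fun m => by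
      simp only [pow_succ', Equiv.Perm.mul_apply]
      exact h.apply_mem_iff σ hK _) n
    simp only [hfix, pow_zero, Equiv.Perm.one_apply] at this
    tauto
  · exact σ.even_of_pow_apply_eq (by rwa [pow_mul]) hfix

theorem isDiamondPartition (h : IsSplitPartition G K I) {A B : Set V} (hA : A ⊆ K)
    (hB : B ⊆ I) (hA₀ : A.Nonempty) (hA₁ : (K \ A).Nonempty) (hB₀ : B.Nonempty)
    (hB₁ : (I \ B).Nonempty) : IsDiamondPartition G A B (K \ A) (I \ B) := by
  refine ⟨hA₀, hB₀, hA₁, hB₁, h.1.mono hA hB, Set.disjoint_sdiff_right,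
    h.1.mono hA Set.sdiff_subset, (h.1.mono Set.sdiff_subset hB).symm, Set.disjoint_sdiff_right,
    h.1.mono Set.sdiff_subset Set.sdiff_subset, ?_,
    fun u hu v hv => h.2.2.1 (hA hu) hv.1 fun huv => hv.2 (huv ▸ hu),
    fun u hu v hv => h.2.2.2 u (hB hu) v hv.1⟩
  rw [Set.union_assoc, Set.union_union_union_comm, Set.union_sdiff_cancel hA,
    Set.union_sdiff_cancel hB, h.2.1]

theorem exists_isDiamondPartition (h : IsSplitPartition G K I) (hK : 2 ≤ K.ncard)
    (hI : 2 ≤ I.ncard) : ∃ V1 V2 V3 V4, IsDiamondPartition G V1 V2 V3 V4 := by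
  obtain ⟨a, ha⟩ := Set.nonempty_of_ncard_ne_zero (by omega : K.ncard ≠ 0)
  obtain ⟨c, hc⟩ := Set.nonempty_of_ncard_ne_zero (by omega : I.ncard ≠ 0)
  exact ⟨_, _, _, _, h.isDiamondPartition (Set.singleton_subset_iff.mpr ha)
    (Set.singleton_subset_iff.mpr hc) (Set.singleton_nonempty a)
    (Set.nonempty_of_ncard_ne_zero (by rw [Set.ncard_sdiff_singleton_of_mem ha]; omega))
    (Set.singleton_nonempty c)
    (Set.nonempty_of_ncard_ne_zero (by rw [Set.ncard_sdiff_singleton_of_mem hc]; omega))⟩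

variable [Finite V]

theorem ncard_add_ncard (h : IsSplitPartition G K I) : K.ncard + I.ncard = Nat.card V := by
  rw [← h.isCompl.compl_eq, Set.ncard_add_ncard_compl]

theorem ncard_le_ncard_add_one_of_isIndepSet (h : IsSplitPartition G K I) {s : Set V}
    (hs : G.IsIndepSet s) : s.ncard ≤ I.ncard + 1 := by
  have hsK : (s ∩ K).ncard ≤ 1 := Set.ncard_le_one_iff_subsingleton.mpr fun x hx y hy =>
    by_contra fun hxy => hs hx.1 hy.1 hxy (h.2.2.1 hx.2 hy.2 hxy)
  have hsub : s ⊆ s ∩ K ∪ I := fun x hx => by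
    by_cases hxK : x ∈ K
    · exact Or.inl ⟨hx, hxK⟩
    · exact Or.inr (h.notMem_left_iff.mp hxK)
  calc s.ncard ≤ (s ∩ K ∪ I).ncard := Set.ncard_le_ncard hsub
    _ ≤ (s ∩ K).ncard + I.ncard := Set.ncard_union_le _ _
    _ ≤ I.ncard + 1 := by omega

theorem ncard_le_ncard_add_one (h : IsSplitPartition G K I) (σ : G ≃g Gᶜ) :
    K.ncard ≤ I.ncard + 1 := by
  simpa [Set.ncard_image_of_injective _ σ.injective] using
    h.ncard_le_ncard_add_one_of_isIndepSet (σ.isIndepSet_image h.2.2.1)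

theorem ncard_eq_ncard (h : IsSplitPartition G K I) (σ : G ≃g Gᶜ) (heven : Even (Nat.card V)) :
    K.ncard = I.ncard := by
  have hK := h.ncard_le_ncard_add_one σ
  have hI := h.compl.ncard_le_ncard_add_one σ.compl
  have hsum := h.ncard_add_ncard
  obtain ⟨m, hm⟩ := heven
  omega

theorem not_isClique_insert (h : IsSplitPartition G K I) (σ : G ≃g Gᶜ)
    (hcard : K.ncard = I.ncard) {w : V} (hw : w ∈ I) : ¬ G.IsClique (insert w K) := fun hc => by
  have := (h.insert_sdiff hc).ncard_le_ncard_add_one σ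
  rw [Set.ncard_insert_of_notMem (h.1.notMem_of_mem_right hw),
    Set.ncard_sdiff_singleton_add_one hw] at this
  omega

theorem exists_apply_mem_of_image_ne (h : IsSplitPartition G K I) (σ : G ≃g Gᶜ)
    (hcard : K.ncard = I.ncard) (hne : σ '' K ≠ I) :
    ∃ u ∈ K, σ u ∈ K ∧ ∀ x ∈ K, x ≠ u → σ x ∈ I := by
  have hsub : ¬ σ '' K ⊆ I := fun hsub => hne <| Set.eq_of_subset_of_ncard_le hsub <| by
    rw [Set.ncard_image_of_injective _ σ.injective, hcard]
  obtain ⟨_, ⟨u, hu, rfl⟩, hσu⟩ := Set.not_subset.mp hsub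
  have hσu : σ u ∈ K := by_contra fun h' => hσu (h.notMem_left_iff.mp h')
  refine ⟨u, hu, hσu, fun x hx hxu => h.notMem_left_iff.mp fun hσx => ?_⟩
  exact (σ.adj_apply_iff_not_adj hxu).mp (h.2.2.1 hσx hσu (σ.injective.ne hxu))
    (h.2.2.1 hx hu hxu)

theorem image_eq (h : IsSplitPartition G K I) (σ : G ≃g Gᶜ) (hcard : K.ncard = I.ncard) :
    σ '' K = I := by
  by_contra hne
  have hne' : σ '' I ≠ K := fun h' => hne (h.compl.isCompl.image_eq_of_image_eq σ.bijective h')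
  obtain ⟨u, hu, hσu, hσK⟩ := h.exists_apply_mem_of_image_ne σ hcard hne
  obtain ⟨w, hw, hσw, hσI⟩ := h.compl.exists_apply_mem_of_image_ne σ.compl hcard.symm hne'
  by_cases huw : G.Adj u w
  · exact h.not_isClique_insert σ hcard hw (h.isClique_insert_of_apply_mem σ hσw hσK huw)
  · refine h.compl.not_isClique_insert σ.compl hcard.symm hu
      (h.compl.isClique_insert_of_apply_mem σ.compl hσu hσI ?_)
    exact (G.compl_adj w u).mpr ⟨(h.1.ne_of_mem hu hw).symm, fun hwu => huw hwu.symm⟩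

theorem exists_subset_image_image_eq_sdiff (h : IsSplitPartition G K I)
    (σ : G ≃g Gᶜ) (hK : σ '' K = I) : ∃ A ⊆ K, σ '' (σ '' A) = K \ A := by
  obtain ⟨S, hS⟩ := Equiv.Perm.exists_image_eq_compl (σ.toEquiv ^ 2) fun x n hx =>
    h.even_of_sq_pow_apply_eq σ hK hx
  have hsq : ∀ X, σ '' (σ '' X) = ⇑(σ.toEquiv ^ 2) '' X := fun X => by
    rw [Set.image_image]; rfl
  refine ⟨K ∩ S, Set.inter_subset_left, ?_⟩
  rw [hsq, Set.image_inter (Equiv.injective _), ← hsq, hK,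
    h.isCompl.image_eq_of_image_eq σ.bijective hK, hS, Set.sdiff_self_inter]
  rfl

theorem exists_isDiamondPartition_image (h : IsSplitPartition G K I) (σ : G ≃g Gᶜ)
    (hcard : K.ncard = I.ncard) (hK₀ : K.Nonempty) :
    ∃ V1 V2 V3 V4, IsDiamondPartition G V1 V2 V3 V4 ∧
      σ '' V1 = V2 ∧ σ '' V2 = V3 ∧ σ '' V3 = V4 ∧ σ '' V4 = V1 := by
  have hK := h.image_eq σ hcard
  have hI := h.isCompl.image_eq_of_image_eq σ.bijective hK
  obtain ⟨A, hAK, hA⟩ := h.exists_subset_image_image_eq_sdiff σ hK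
  have hσKA : σ '' (K \ A) = I \ σ '' A := by rw [Set.image_sdiff σ.injective, hK]
  have hσIA : σ '' (I \ σ '' A) = A := by
    rw [Set.image_sdiff σ.injective, hI, hA, Set.sdiff_sdiff_cancel_left hAK]
  have hne : A.Nonempty ∧ (K \ A).Nonempty := by
    obtain ⟨x, hx⟩ := hK₀
    by_cases hxA : x ∈ A
    · have hxA : A.Nonempty := ⟨x, hxA⟩
      exact ⟨hxA, hA ▸ (hxA.image σ).image σ⟩
    · have hxA : (K \ A).Nonempty := ⟨x, hx, hxA⟩
      exact ⟨hσIA ▸ hσKA ▸ (hxA.image σ).image σ, hxA⟩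
  exact ⟨A, σ '' A, K \ A, I \ σ '' A,
    h.isDiamondPartition hAK (hK ▸ Set.image_mono hAK) hne.1 hne.2 (hne.1.image σ)
      (hσKA ▸ hne.2.image σ), rfl, hA, hσKA, hσIA⟩

end IsSplitPartition

/-- Every self-complementary split graph whose clique part and
independent part each contain at least two vertices admits a diamond partition.
Moreover, every self-complementary split graph of order `4k` (`k ≥ 1`) admits a diamond
partition `{V1, V2, V3, V4}` that is self-complementary, i.e., some antimorphism `σ` of
`G` satisfies `σ(V1) = V2`, `σ(V2) = V3`, `σ(V3) = V4`, and `σ(V4) = V1`. -/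
theorem scs_diamond_partition :
    (∀ (V : Type) [Finite V] (G : SimpleGraph V) (K I : Set V),
      IsSplitPartition G K I → IsSelfCompl G → 2 ≤ K.ncard → 2 ≤ I.ncard →
      ∃ V1 V2 V3 V4, IsDiamondPartition G V1 V2 V3 V4) ∧
    (∀ k : ℕ, 1 ≤ k → ∀ G : SimpleGraph (Fin (4 * k)), IsSplit G → IsSelfCompl G →
      ∃ V1 V2 V3 V4, IsDiamondPartition G V1 V2 V3 V4 ∧
        ∃ σ : G ≃g Gᶜ, ⇑σ '' V1 = V2 ∧ ⇑σ '' V2 = V3 ∧ ⇑σ '' V3 = V4 ∧ ⇑σ '' V4 = V1) := by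
  refine ⟨fun V _ G K I h _ hK hI => h.exists_isDiamondPartition hK hI, ?_⟩
  rintro k hk G ⟨K, I, h⟩ ⟨σ⟩
  have hsum := h.ncard_add_ncard
  have hcard := h.ncard_eq_ncard σ ⟨2 * k, by rw [Nat.card_fin]; ring⟩
  rw [Nat.card_fin] at hsum
  obtain ⟨V1, V2, V3, V4, hdiam, himg⟩ :=
    h.exists_isDiamondPartition_image σ hcard (Set.nonempty_of_ncard_ne_zero (by omega))
  exact ⟨V1, V2, V3, V4, hdiam, σ, himg⟩
end

section
/- Let k1, k2 > 0, let n = 4(k1 + k2), and let d be an integer with d - 1 > n - d. If the degree sequence (d^{2k1}, (d-1)^{2k2}, (n-d)^{2k2}, (n-1-d)^{2k1}) has at least one realization, then it is not forcibly self-complementary; that is, it has a realization that is not self-complementary. -/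
open SimpleGraph

/-!
A self-complementary graph `G` on `4s` vertices satisfies `deg (f v) = 4s - 1 - deg v` for an
isomorphism `f : G ≃g Gᶜ`, so `f` swaps the set `A` of vertices of degree `≥ 2s` with its
complement and sends the edges between `A` and `Aᶜ` to the non-edges between them: exactly half
of the pairs across the cut are edges. A 2-switch (trade edges `uv, xy` for non-edges `ux, vy`)
keeps the degree sequence, so if all realizations were self-complementary, no 2-switch could
change the number of cut edges.

For the degree sequence at hand such rigidity is impossible. If `A` is a clique, every vertex of
`A` has `deg - (|A| - 1)` neighbours outside `A`, and since both degrees occur in `A` the cut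
size is not a multiple of `|A|`. Otherwise take non-adjacent `p, q ∈ A` with `p` having the most
neighbours outside `A`. Rigidity forces all outside neighbours of `p` to have the same set `C` of
non-neighbours in `A`, an independent set of low-degree vertices of size `|N(p) \ A|`. Running
the argument again from two vertices of `C` gives a second such set of outside neighbours,
disjoint from the first. A vertex of top degree lies in neither `C`, so it is adjacent to both
sets and has more neighbours outside `A` than `p`.
-/

open Finset

namespace SimpleGraph

section DegreeSequence

variable {V : Type*} [Fintype V] {G : SimpleGraph V} [DecidableRel G.Adj]

lemma deg_eq_degree (v : V) : deg G v = G.degree v := by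
  rw [deg, Set.ncard_eq_toFinset_card', ← neighborFinset_def, card_neighborFinset_eq_degree]

lemma degMultiset_eq_map_degree : degMultiset G = univ.val.map fun v ↦ G.degree v := by
  rw [degMultiset, Subsingleton.elim (Fintype.ofFinite V) ‹_›]
  exact Multiset.map_congr rfl fun v _ ↦ deg_eq_degree v

lemma degree_mem_degMultiset (v : V) : G.degree v ∈ degMultiset G := by
  rw [degMultiset_eq_map_degree]
  exact Multiset.mem_map_of_mem _ (mem_univ v)

lemma card_filter_degree (p : ℕ → Prop) [DecidablePred p] :
    #{v | p (G.degree v)} = Multiset.countP p (degMultiset G) := by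
  rw [degMultiset_eq_map_degree, Multiset.countP_map]
  rfl

lemma exists_degree_eq_of_mem {c : ℕ} (hc : c ∈ degMultiset G) : ∃ v, G.degree v = c := by
  rw [degMultiset_eq_map_degree] at hc
  obtain ⟨v, -, hv⟩ := Multiset.mem_map.1 hc
  exact ⟨v, hv⟩

end DegreeSequence

section SelfComplementary

variable {V : Type*} [Fintype V] [DecidableEq V] {G : SimpleGraph V} [DecidableRel G.Adj]

lemma degree_add_degree_of_iso_compl (f : G ≃g Gᶜ) (v : V) :
    G.degree (f v) + G.degree v + 1 = Fintype.card V := by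
  have hf : Gᶜ.degree (f v) = G.degree v := by
    rw [← card_neighborSet_eq_degree, ← card_neighborSet_eq_degree]
    exact Fintype.card_congr (f.mapNeighborSet v).symm
  have := G.degree_lt_card_verts (f v)
  rw [degree_compl] at hf
  omega

lemma two_mul_card_interedges_of_iso_compl (f : G ≃g Gᶜ) {A : Finset V}
    (hA : ∀ v, v ∈ A ↔ f v ∉ A) : 2 * #(G.interedges A Aᶜ) = #A * #Aᶜ := by
  have hswap : #(G.interedges A Aᶜ) = #(Gᶜ.interedges A Aᶜ) := by
    refine card_nbij' (fun e ↦ (f e.2, f e.1)) (fun e ↦ (f.symm e.2, f.symm e.1)) ?_ ?_ ?_ ?_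
    · rintro ⟨a, b⟩ h
      simp only [mem_coe, mem_interedges_iff, mem_compl] at h ⊢
      exact ⟨not_not.1 (mt (hA b).2 h.2.1), (hA a).1 h.1, f.map_adj_iff.2 h.2.2.symm⟩
    · rintro ⟨a, b⟩ h
      simp only [mem_coe, mem_interedges_iff, mem_compl] at h ⊢
      refine ⟨?_, ?_, (f.map_adj_iff.1 (by simpa using h.2.2)).symm⟩
      · exact (hA _).2 (by simpa using h.2.1)
      · exact fun h' ↦ (hA _).1 h' (by simpa using h.1)
    all_goals intro e _; simp
  rw [two_mul, ← card_interedges_add_card_interedges_compl G disjoint_compl_right, ← hswap]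

lemma two_mul_card_interedges_of_isSelfCompl {m : ℕ} (hV : Fintype.card V = 2 * m)
    {A : Finset V} (hA : ∀ v, v ∈ A ↔ m ≤ G.degree v) (hG : IsSelfCompl G) :
    2 * #(G.interedges A Aᶜ) = #A * #Aᶜ := by
  obtain ⟨f⟩ := hG
  refine two_mul_card_interedges_of_iso_compl f fun v ↦ ?_
  have := degree_add_degree_of_iso_compl f v
  rw [hA, hA]
  omega

end SelfComplementary

section TwoSwitch

variable {V : Type*} (G : SimpleGraph V) (u v x y : V)

def twoSwitch : SimpleGraph V :=
  fromEdgeSet (G.edgeSet \ {s(u, v), s(x, y)} ∪ {s(u, x), s(v, y)})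

def IsTwoSwitch : Prop :=
  G.Adj u v ∧ G.Adj x y ∧ Gᶜ.Adj u x ∧ Gᶜ.Adj v y

variable {G u v x y}

lemma twoSwitch_adj {a b : V} : (G.twoSwitch u v x y).Adj a b ↔
    a ≠ b ∧ (G.Adj a b ∧ s(a, b) ≠ s(u, v) ∧ s(a, b) ≠ s(x, y) ∨
      s(a, b) = s(u, x) ∨ s(a, b) = s(v, y)) := by
  simp only [twoSwitch, fromEdgeSet_adj, Set.mem_union, Set.mem_sdiff, mem_edgeSet,
    Set.mem_insert_iff, Set.mem_singleton_iff]
  tauto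

lemma twoSwitch_comm : G.twoSwitch u v x y = G.twoSwitch v u y x := by
  ext a b
  simp only [twoSwitch_adj, Sym2.eq_swap (a := v) (b := u), Sym2.eq_swap (a := y) (b := x)]
  tauto

lemma twoSwitch_swap : G.twoSwitch u v x y = G.twoSwitch x y u v := by
  ext a b
  simp only [twoSwitch_adj, Sym2.eq_swap (a := x) (b := u), Sym2.eq_swap (a := y) (b := v)]
  tauto

lemma IsTwoSwitch.comm (h : G.IsTwoSwitch u v x y) : G.IsTwoSwitch v u y x :=
  ⟨h.1.symm, h.2.1.symm, h.2.2.2, h.2.2.1⟩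

lemma IsTwoSwitch.swap (h : G.IsTwoSwitch u v x y) : G.IsTwoSwitch x y u v :=
  ⟨h.2.1, h.1, h.2.2.1.symm, h.2.2.2.symm⟩

lemma neighborSet_twoSwitch_left (h : G.IsTwoSwitch u v x y) :
    (G.twoSwitch u v x y).neighborSet u = insert x (G.neighborSet u \ {v}) := by
  obtain ⟨huv, hxy, ⟨hux, hux'⟩, ⟨hvy, hvy'⟩⟩ := h
  have := hxy.symm; have := G.loopless.irrefl u
  ext w
  simp only [mem_neighborSet, twoSwitch_adj, Set.mem_insert_iff, Set.mem_sdiff,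
    Set.mem_singleton_iff, ne_eq, Sym2.eq_iff]
  grind

lemma neighborSet_twoSwitch_of_ne {z : V} (hu : z ≠ u) (hv : z ≠ v) (hx : z ≠ x)
    (hy : z ≠ y) :
    (G.twoSwitch u v x y).neighborSet z = G.neighborSet z := by
  ext w
  simp only [mem_neighborSet, twoSwitch_adj, ne_eq, Sym2.eq_iff]
  have := G.loopless.irrefl z
  grind

lemma deg_twoSwitch_left [Finite V] (h : G.IsTwoSwitch u v x y) :
    deg (G.twoSwitch u v x y) u = deg G u := by
  have hfin := (G.neighborSet u).toFinite
  rw [deg, neighborSet_twoSwitch_left h, Set.ncard_insert_of_notMem _ hfin.sdiff,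
    Set.ncard_sdiff_singleton_add_one (show v ∈ G.neighborSet u from h.1) hfin, deg]
  exact fun hx ↦ h.2.2.1.2 hx.1

lemma deg_twoSwitch [Finite V] (h : G.IsTwoSwitch u v x y) (z : V) :
    deg (G.twoSwitch u v x y) z = deg G z := by
  by_cases hu : z = u
  · subst hu; exact deg_twoSwitch_left h
  by_cases hv : z = v
  · subst hv; rw [twoSwitch_comm]; exact deg_twoSwitch_left h.comm
  by_cases hx : z = x
  · subst hx; rw [twoSwitch_swap]; exact deg_twoSwitch_left h.swap
  by_cases hy : z = y
  · subst hy; rw [twoSwitch_swap, twoSwitch_comm]; exact deg_twoSwitch_left h.swap.comm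
  rw [deg, deg, neighborSet_twoSwitch_of_ne hu hv hx hy]

lemma degMultiset_twoSwitch [Finite V] (h : G.IsTwoSwitch u v x y) :
    degMultiset (G.twoSwitch u v x y) = degMultiset G := by
  simp only [degMultiset, deg_twoSwitch h]

variable [Fintype V] [DecidableEq V] [DecidableRel G.Adj] [DecidableRel (G.twoSwitch u v x y).Adj]
  {A : Finset V}

lemma interedges_twoSwitch_ssubset (h : G.IsTwoSwitch u v x y) (hu : u ∈ A) (hx : x ∈ A)
    (hv : v ∉ A) (hy : y ∉ A) :
    (G.twoSwitch u v x y).interedges A Aᶜ ⊂ G.interedges A Aᶜ := by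
  rw [ssubset_iff_of_subset]
  · refine ⟨(u, v), by simp [mk_mem_interedges_iff, hu, hv, h.1], ?_⟩
    simp only [mk_mem_interedges_iff, twoSwitch_adj, ne_eq, Sym2.eq_iff]
    grind
  · rintro ⟨a, b⟩
    simp only [mk_mem_interedges_iff, mem_compl, twoSwitch_adj, ne_eq, Sym2.eq_iff]
    grind

lemma interedges_ssubset_twoSwitch (h : G.IsTwoSwitch u v x y) (hu : u ∈ A) (hv : v ∈ A)
    (hx : x ∉ A) (hy : y ∉ A) :
    G.interedges A Aᶜ ⊂ (G.twoSwitch u v x y).interedges A Aᶜ := by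
  rw [ssubset_iff_of_subset]
  · refine ⟨(u, x), ?_, by simp [mk_mem_interedges_iff, h.2.2.1.2]⟩
    simp only [mk_mem_interedges_iff, twoSwitch_adj, ne_eq, Sym2.eq_iff, mem_compl]
    grind
  · rintro ⟨a, b⟩
    simp only [mk_mem_interedges_iff, mem_compl, twoSwitch_adj, ne_eq, Sym2.eq_iff]
    grind

end TwoSwitch

section Cut

variable {V : Type*} [Fintype V] [DecidableEq V] {G : SimpleGraph V} [DecidableRel G.Adj]
  {A : Finset V}

lemma card_interedges_eq_sum (s t : Finset V) :
    #(G.interedges s t) = ∑ a ∈ s, #(G.neighborFinset a ∩ t) := by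
  rw [interedges_def, card_filter, sum_product]
  refine sum_congr rfl fun a _ ↦ ?_
  rw [← card_filter]
  congr 1
  ext b
  simp [mem_neighborFinset, and_comm]

lemma degree_add_card_sdiff_neighborFinset (v : V) :
    G.degree v + #(A \ G.neighborFinset v) = #A + #(G.neighborFinset v \ A) := by
  have h₁ := card_sdiff_add_card_inter (G.neighborFinset v) A
  have h₂ := card_sdiff_add_card_inter A (G.neighborFinset v)
  rw [inter_comm, card_neighborFinset_eq_degree] at h₁
  omega

lemma not_dvd_card_interedges_of_isClique (hA : G.IsClique (A : Set V)) {D : ℕ}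
    (hdeg : ∀ a ∈ A, D ≤ G.degree a ∧ G.degree a ≤ D + 1)
    (hlow : ∃ a ∈ A, G.degree a = D) (hhigh : ∃ a ∈ A, G.degree a = D + 1) :
    ¬#A ∣ #(G.interedges A Aᶜ) := by
  have hout : ∀ a ∈ A, #(G.neighborFinset a ∩ Aᶜ) + #A = G.degree a + 1 := by
    intro a ha
    have hM : A \ G.neighborFinset a = {a} := by
      ext w
      simp only [mem_sdiff, mem_neighborFinset, mem_singleton]
      refine ⟨fun hw ↦ by_contra fun hne ↦ hw.2 (hA ha hw.1 (Ne.symm hne)), ?_⟩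
      rintro rfl
      simpa
    have := degree_add_card_sdiff_neighborFinset (G := G) (A := A) a
    rw [hM, card_singleton, sdiff_eq_inter_compl] at this
    omega
  obtain ⟨l, hl, hl'⟩ := hlow
  obtain ⟨t, ht, ht'⟩ := hhigh
  rintro ⟨k, hk⟩
  have hsum : #A * (k + #A) = ∑ a ∈ A, (G.degree a + 1) := by
    rw [mul_add, ← hk, card_interedges_eq_sum, ← smul_eq_mul, ← sum_const,
      ← sum_add_distrib]
    exact sum_congr rfl hout
  have hlt : #A * (D + 1) < #A * (k + #A) := by
    rw [hsum, ← smul_eq_mul, ← sum_const]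
    exact sum_lt_sum (fun a ha ↦ by have := hdeg a ha; omega) ⟨t, ht, by omega⟩
  have hgt : #A * (k + #A) < #A * (D + 2) := by
    rw [hsum, ← smul_eq_mul, ← sum_const]
    exact sum_lt_sum (fun a ha ↦ by have := hdeg a ha; omega) ⟨l, hl, by omega⟩
  have := Nat.lt_of_mul_lt_mul_left hlt
  have := Nat.lt_of_mul_lt_mul_left hgt
  omega

lemma mem_sdiff_neighborFinset_self {a : V} (ha : a ∈ A) : a ∈ A \ G.neighborFinset a := by
  simp [ha]

lemma lt_card_neighborFinset_sdiff {E : ℕ} (hdegA : ∀ a ∈ A, #A + E ≤ G.degree a + 1)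
    {p q : V} (hp : p ∈ A) (hq : q ∈ A) (hpq : Gᶜ.Adj p q) :
    E < #(G.neighborFinset p \ A) := by
  have hM : 2 ≤ #(A \ G.neighborFinset p) :=
    one_lt_card.2 ⟨p, mem_sdiff_neighborFinset_self hp, q, by simp [hq, hpq.2], hpq.1⟩
  have := degree_add_card_sdiff_neighborFinset (G := G) (A := A) p
  have := hdegA p hp
  omega

lemma exists_max_of_not_isClique {E : ℕ} (hdegA : ∀ a ∈ A, #A + E ≤ G.degree a + 1)
    (hdegA' : ∀ a ∈ A, G.degree a ≤ #A + E)
    (hA : ¬G.IsClique (A : Set V)) :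
    ∃ p ∈ A, ∃ q ∈ A, Gᶜ.Adj p q ∧
      ∀ a ∈ A, #(G.neighborFinset a \ A) ≤ #(G.neighborFinset p \ A) := by
  obtain ⟨p₀, hp₀, q₀, hq₀, hne, hnadj⟩ : ∃ p ∈ A, ∃ q ∈ A, p ≠ q ∧ ¬G.Adj p q := by
    simpa [IsClique, Set.Pairwise] using hA
  obtain ⟨m, hm, hmax⟩ := exists_max_image A (fun a ↦ #(G.neighborFinset a \ A)) ⟨p₀, hp₀⟩
  by_cases hmq : ∃ q ∈ A, Gᶜ.Adj m q
  · obtain ⟨q, hq, hmq⟩ := hmq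
    exact ⟨m, hm, q, hq, hmq, hmax⟩
  -- `m` is adjacent to the rest of `A`, so it has at most `E + 1` neighbours outside `A`,
  -- while `p₀` has more than `E`.
  refine ⟨p₀, hp₀, q₀, hq₀, ⟨hne, hnadj⟩, fun a ha ↦ (hmax a ha).trans ?_⟩
  push Not at hmq
  have hM : A \ G.neighborFinset m ⊆ {m} := by
    intro w hw
    simp only [mem_sdiff, mem_neighborFinset, mem_singleton] at hw ⊢
    by_contra hwm
    exact hmq w hw.1 ⟨Ne.symm hwm, hw.2⟩
  have := (card_le_card hM).trans_eq (card_singleton m)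
  have := degree_add_card_sdiff_neighborFinset (G := G) (A := A) m
  have := hdegA' m hm
  have := lt_card_neighborFinset_sdiff hdegA hp₀ hq₀ ⟨hne, hnadj⟩
  omega

/-- The first field says that no 2-switch decreases the number of edges between `A` and `Aᶜ`,
the second that none increases it. -/
structure CutRigid (G : SimpleGraph V) (A : Finset V) : Prop where
  adj_of_compl_adj ⦃p q b b' : V⦄ : p ∈ A → q ∈ A → b ∉ A → b' ∉ A → b ≠ b' →
    Gᶜ.Adj p q → G.Adj p b → G.Adj q b' → G.Adj b b'
  not_adj_of_adj ⦃p q b b' : V⦄ : p ∈ A → q ∈ A → b ∉ A → b' ∉ A → p ≠ q →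
    G.Adj b b' → ¬G.Adj b p → ¬G.Adj b' q → ¬G.Adj p q

lemma cutRigid_of_isSelfCompl {m : ℕ} (hV : Fintype.card V = 2 * m)
    (hA : ∀ v, v ∈ A ↔ m ≤ G.degree v) (hG : IsSelfCompl G)
    (hsw : ∀ u v x y, G.IsTwoSwitch u v x y → IsSelfCompl (G.twoSwitch u v x y)) :
    CutRigid G A := by
  classical
  have hcross : ∀ u v x y, G.IsTwoSwitch u v x y →
      #((G.twoSwitch u v x y).interedges A Aᶜ) = #(G.interedges A Aᶜ) := by
    intro u v x y h
    have hA' : ∀ w, w ∈ A ↔ m ≤ (G.twoSwitch u v x y).degree w := fun w ↦ by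
      rw [← deg_eq_degree, deg_twoSwitch h, deg_eq_degree, hA]
    have h₁ := two_mul_card_interedges_of_isSelfCompl hV hA' (hsw u v x y h)
    have h₂ := two_mul_card_interedges_of_isSelfCompl hV hA hG
    omega
  constructor
  · intro p q b b' hp hq hb hb' hbb' hpq hpb hqb'
    by_contra hnot
    have h : G.IsTwoSwitch p b q b' := ⟨hpb, hqb', hpq, hbb', hnot⟩
    exact (card_lt_card (interedges_twoSwitch_ssubset h hp hq hb hb')).ne (hcross _ _ _ _ h)
  · intro p q b b' hp hq hb hb' hpq hbb' hbp hb'q hadj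
    have h : G.IsTwoSwitch p q b b' :=
      ⟨hadj, hbb', ⟨ne_of_mem_of_not_mem hp hb, fun h ↦ hbp h.symm⟩,
        ⟨ne_of_mem_of_not_mem hq hb', fun h ↦ hb'q h.symm⟩⟩
    exact (card_lt_card (interedges_ssubset_twoSwitch h hp hq hb hb')).ne' (hcross _ _ _ _ h)

end Cut

namespace CutRigid

variable {V : Type*} [Fintype V] [DecidableEq V] {G : SimpleGraph V} [DecidableRel G.Adj]
  {A : Finset V} {E : ℕ} (hG : CutRigid G A) (hE : 1 ≤ E)
  (hdegA : ∀ a ∈ A, #A + E ≤ G.degree a + 1) (hdegB : ∀ b ∉ A, G.degree b + E ≤ #A)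

include hG hE hdegA hdegB in
lemma sdiff_neighborFinset_eq_of_max {p q : V} (hp : p ∈ A) (hq : q ∈ A) (hpq : Gᶜ.Adj p q)
    (hmax : ∀ a ∈ A, #(G.neighborFinset a \ A) ≤ #(G.neighborFinset p \ A)) ⦃b b' x : V⦄
    (hb : b ∈ G.neighborFinset p \ A) (hb' : b' ∈ G.neighborFinset q \ A) (hbb' : b ≠ b')
    (hx : x ∈ A \ G.neighborFinset b) :
    b' ∈ G.neighborFinset p ∧ A \ G.neighborFinset x = A \ G.neighborFinset b' ∧
      #(G.neighborFinset x \ A) = #(G.neighborFinset p \ A) ∧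
      #(A \ G.neighborFinset b') = #(G.neighborFinset p \ A) ∧ G.degree x + 1 = #A + E := by
  simp only [mem_sdiff, mem_neighborFinset] at hb hb' hx
  have hadj : G.Adj b b' := hG.adj_of_compl_adj hp hq hb.2 hb'.2 hbb' hpq hb.1 hb'.1
  have hsub₁ : (G.neighborFinset p \ A).erase b' ⊆ G.neighborFinset b' \ A := by
    intro w hw
    simp only [mem_erase, mem_sdiff, mem_neighborFinset] at hw ⊢
    exact ⟨(hG.adj_of_compl_adj hp hq hw.2.2 hb'.2 hw.1 hpq hw.2.1 hb'.1).symm, hw.2.2⟩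
  have hsub₂ : A \ G.neighborFinset b' ⊆ A \ G.neighborFinset x := by
    intro w hw
    simp only [mem_sdiff, mem_neighborFinset] at hw ⊢
    refine ⟨hw.1, fun hxw ↦ ?_⟩
    obtain rfl | hne := eq_or_ne x w
    · exact G.loopless.irrefl _ hxw
    · exact hG.not_adj_of_adj hx.1 hw.1 hb.2 hb'.2 hne hadj hx.2 hw.2 hxw
  have h₁ := degree_add_card_sdiff_neighborFinset (G := G) (A := A) b'
  have h₂ := degree_add_card_sdiff_neighborFinset (G := G) (A := A) x
  have h₃ := hdegB b' hb'.2
  have h₄ := hdegA x hx.1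
  have h₅ := hmax x hx.1
  have h₆ := card_le_card hsub₁
  have h₇ := card_le_card hsub₂
  have h₈ := pred_card_le_card_erase (s := G.neighborFinset p \ A) (a := b')
  -- With `c = #(N p \ A)`, these give `E + c - 1 ≤ #(A \ N b') ≤ #(A \ N x) ≤ c + 1 - E`
  -- (the first step losing `1` only if `b' ∈ N p`), so `E = 1` and all steps are equalities.
  have hmem : b' ∈ G.neighborFinset p := by
    by_contra h
    rw [erase_eq_of_notMem (by simp [h])] at h₆
    omega
  have heq := eq_of_subset_of_card_le hsub₂ (by omega)
  exact ⟨hmem, heq.symm, by omega, by omega, by omega⟩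

include hG hE hdegA hdegB in
lemma exists_cluster {p q : V} (hp : p ∈ A) (hq : q ∈ A) (hpq : Gᶜ.Adj p q)
    (hmax : ∀ a ∈ A, #(G.neighborFinset a \ A) ≤ #(G.neighborFinset p \ A)) :
    ∃ C : Finset V, (∀ b ∈ G.neighborFinset p \ A, A \ G.neighborFinset b = C) ∧
      #C = #(G.neighborFinset p \ A) ∧ ∀ x ∈ C, A \ G.neighborFinset x = C ∧
        #(G.neighborFinset x \ A) = #(G.neighborFinset p \ A) ∧ G.degree x + 1 = #A + E := by
  have key := hG.sdiff_neighborFinset_eq_of_max hE hdegA hdegB hp hq hpq hmax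
  have hM : ∀ b ∉ A, (A \ G.neighborFinset b).Nonempty := fun b hb ↦ by
    have := degree_add_card_sdiff_neighborFinset (G := G) (A := A) b
    have := hdegB b hb
    exact card_pos.1 (by omega)
  have hp₂ : 1 < #(G.neighborFinset p \ A) := by
    have := lt_card_neighborFinset_sdiff hdegA hp hq hpq
    omega
  have hq₂ : 1 < #(G.neighborFinset q \ A) := by
    have := lt_card_neighborFinset_sdiff hdegA hq hp hpq.symm
    omega
  have hsup : G.neighborFinset p \ A ⊆ G.neighborFinset q \ A := by
    intro b hb
    by_contra hbq
    obtain ⟨b', hb', hb'b⟩ := exists_mem_ne hq₂ b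
    have hqb : q ∈ A \ G.neighborFinset b := by
      simp only [mem_sdiff, mem_neighborFinset] at hb hbq ⊢
      exact ⟨hq, fun h ↦ hbq ⟨h.symm, hb.2⟩⟩
    have hqb' := (key hb hb' hb'b.symm hqb).2.1 ▸ mem_sdiff_neighborFinset_self hq
    simp only [mem_sdiff, mem_neighborFinset] at hb' hqb'
    exact hqb'.2 hb'.1.symm
  obtain ⟨b₀, hb₀⟩ : (G.neighborFinset p \ A).Nonempty := card_pos.1 (by omega)
  have hconst :
      ∀ b ∈ G.neighborFinset p \ A, A \ G.neighborFinset b = A \ G.neighborFinset b₀ := by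
    intro b hb
    obtain rfl | hne := eq_or_ne b b₀
    · rfl
    apply Subset.antisymm <;> intro x hx
    · exact (key hb (hsup hb₀) hne hx).2.1 ▸ mem_sdiff_neighborFinset_self (sdiff_subset hx)
    · exact (key hb₀ (hsup hb) hne.symm hx).2.1 ▸ mem_sdiff_neighborFinset_self (sdiff_subset hx)
  obtain ⟨b₁, hb₁, hb₁₀⟩ := exists_mem_ne hp₂ b₀
  obtain ⟨x₁, hx₁⟩ := hM b₁ (mem_sdiff.1 hb₁).2
  refine ⟨A \ G.neighborFinset b₀, hconst, (key hb₁ (hsup hb₀) hb₁₀ hx₁).2.2.2.1,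
    fun x hx ↦ ?_⟩
  rw [← hconst b₁ hb₁] at hx
  obtain ⟨-, h₁, h₂, -, h₃⟩ := key hb₁ (hsup hb₀) hb₁₀ hx
  exact ⟨h₁, h₂, h₃⟩

include hG hE hdegA hdegB in
lemma isClique (hdegA' : ∀ a ∈ A, G.degree a ≤ #A + E)
    (htop : ∃ a ∈ A, G.degree a = #A + E) :
    G.IsClique (A : Set V) := by
  by_contra hA
  obtain ⟨p, hp, q, hq, hpq, hmax⟩ := exists_max_of_not_isClique hdegA hdegA' hA
  obtain ⟨C₁, hC₁, hC₁card, hC₁x⟩ := hG.exists_cluster hE hdegA hdegB hp hq hpq hmax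
  have hp₂ := lt_card_neighborFinset_sdiff hdegA hp hq hpq
  obtain ⟨x, hx, x', hx', hxx'⟩ := one_lt_card.1 (show 1 < #C₁ by omega)
  obtain ⟨hMx, hcBx, -⟩ := hC₁x x hx
  rw [← hMx] at hx hx'
  obtain ⟨C₂, hC₂, -, hC₂x⟩ := hG.exists_cluster hE hdegA hdegB (mem_sdiff.1 hx).1
    (mem_sdiff.1 hx').1 ⟨hxx', (mem_sdiff.1 hx').2 ∘ (G.mem_neighborFinset _ _).2⟩ (hcBx ▸ hmax)
  have hdisj : Disjoint (G.neighborFinset p \ A) (G.neighborFinset x \ A) := by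
    refine Finset.disjoint_left.2 fun b hbp hbx ↦ ?_
    have hxb : x ∈ A \ G.neighborFinset b := (hC₁ b hbp).trans hMx.symm ▸ hx
    simp only [mem_sdiff, mem_neighborFinset] at hxb hbx
    exact hxb.2 hbx.1.symm
  obtain ⟨v, hv, hvdeg⟩ := htop
  have hsub : ∀ C : Finset V, (∀ y ∈ C, G.degree y + 1 = #A + E) →
      ∀ b ∉ A, A \ G.neighborFinset b = C → b ∈ G.neighborFinset v \ A := by
    intro C hC b hb hbC
    have hvC : v ∉ A \ G.neighborFinset b := fun h ↦ by have := hC v (hbC ▸ h); omega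
    simp only [mem_sdiff, mem_neighborFinset, not_and, not_not] at hvC ⊢
    exact ⟨(hvC hv).symm, hb⟩
  have hunion :
      (G.neighborFinset p \ A) ∪ (G.neighborFinset x \ A) ⊆ G.neighborFinset v \ A := by
    refine union_subset (fun b hb ↦ ?_) (fun b hb ↦ ?_)
    · exact hsub C₁ (fun y hy ↦ (hC₁x y hy).2.2) b (mem_sdiff.1 hb).2 (hC₁ b hb)
    · exact hsub C₂ (fun y hy ↦ (hC₂x y hy).2.2) b (mem_sdiff.1 hb).2 (hC₂ b hb)
  have := card_le_card hunion
  rw [card_union_of_disjoint hdisj] at this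
  have := hmax v hv
  omega

end CutRigid

theorem not_cutRigid {V : Type*} [Fintype V] [DecidableEq V] {G : SimpleGraph V}
    [DecidableRel G.Adj] {A : Finset V} {E : ℕ} (hE : 1 ≤ E)
    (hdegA : ∀ a ∈ A, #A + E ≤ G.degree a + 1 ∧ G.degree a ≤ #A + E)
    (hdegB : ∀ b ∉ A, G.degree b + E ≤ #A)
    (htop : ∃ a ∈ A, G.degree a = #A + E) (hlow : ∃ a ∈ A, G.degree a + 1 = #A + E)
    (hdvd : #A ∣ #(G.interedges A Aᶜ)) : ¬CutRigid G A := fun hG ↦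
  not_dvd_card_interedges_of_isClique (D := #A + E - 1)
    (hG.isClique hE (fun a ha ↦ (hdegA a ha).1) hdegB (fun a ha ↦ (hdegA a ha).2) htop)
    (fun a ha ↦ by have := hdegA a ha; omega) (hlow.imp fun _ ⟨ha, h⟩ ↦ ⟨ha, by omega⟩)
    (htop.imp fun _ ⟨ha, h⟩ ↦ ⟨ha, by omega⟩) hdvd

end SimpleGraph

open SimpleGraph

def fourDegrees (k₁ k₂ d : ℕ) : Multiset ℕ :=
  Multiset.replicate (2 * k₁) d + Multiset.replicate (2 * k₂) (d - 1) +
    Multiset.replicate (2 * k₂) (4 * (k₁ + k₂) - d) +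
    Multiset.replicate (2 * k₁) (4 * (k₁ + k₂) - 1 - d)

section FourDegrees

variable {V : Type*} [Fintype V] {G : SimpleGraph V} [DecidableRel G.Adj] {k₁ k₂ d : ℕ}
  (hk₁ : 0 < k₁) (hk₂ : 0 < k₂) (hd : 4 * (k₁ + k₂) - d < d - 1)
  (hG : degMultiset G = fourDegrees k₁ k₂ d)

include hG

lemma card_eq_of_degMultiset_eq_fourDegrees : Fintype.card V = 4 * (k₁ + k₂) := by
  have := congrArg Multiset.card hG
  simp only [degMultiset_eq_map_degree, Multiset.card_map, card_val, card_univ, fourDegrees,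
    Multiset.card_add, Multiset.card_replicate] at this
  omega

lemma degree_eq_of_degMultiset_eq_fourDegrees (v : V) :
    G.degree v = d ∨ G.degree v = d - 1 ∨ G.degree v = 4 * (k₁ + k₂) - d ∨
      G.degree v = 4 * (k₁ + k₂) - 1 - d := by
  have := degree_mem_degMultiset (G := G) v
  simp only [hG, fourDegrees, Multiset.mem_add, Multiset.mem_replicate] at this
  omega

include hk₁ hk₂ hd in
lemma card_filter_le_degree_of_degMultiset_eq_fourDegrees :
    #{v | 2 * (k₁ + k₂) ≤ G.degree v} = 2 * (k₁ + k₂) := by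
  rw [card_filter_degree, hG, fourDegrees, Multiset.countP_add, Multiset.countP_add,
    Multiset.countP_add, Multiset.countP_eq_card.2, Multiset.countP_eq_card.2,
    Multiset.countP_eq_zero.2, Multiset.countP_eq_zero.2]
  · simp only [Multiset.card_replicate]; omega
  all_goals intro c hc; rw [Multiset.eq_of_mem_replicate hc]; omega

end FourDegrees

theorem exists_not_isSelfCompl_of_degMultiset_eq_fourDegrees {V : Type*} [Fintype V]
    {k₁ k₂ d : ℕ} (hk₁ : 0 < k₁) (hk₂ : 0 < k₂) (hd : 4 * (k₁ + k₂) - d < d - 1)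
    (G : SimpleGraph V) (hG : degMultiset G = fourDegrees k₁ k₂ d) :
    ∃ G' : SimpleGraph V, degMultiset G' = degMultiset G ∧ ¬IsSelfCompl G' := by
  by_contra! hsc
  classical
  set A : Finset V := {v | 2 * (k₁ + k₂) ≤ G.degree v}
  have hmemA : ∀ v, v ∈ A ↔ 2 * (k₁ + k₂) ≤ G.degree v := fun v ↦ by simp [A]
  have hV : Fintype.card V = 2 * (2 * (k₁ + k₂)) := by
    rw [card_eq_of_degMultiset_eq_fourDegrees hG]; ring
  have hA : #A = 2 * (k₁ + k₂) :=
    card_filter_le_degree_of_degMultiset_eq_fourDegrees hk₁ hk₂ hd hG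
  have hcross := two_mul_card_interedges_of_isSelfCompl hV hmemA (hsc G rfl)
  rw [card_compl, hA, hV, show 2 * (2 * (k₁ + k₂)) - 2 * (k₁ + k₂) = 2 * (k₁ + k₂) by omega]
    at hcross
  obtain ⟨t, ht⟩ : ∃ v, G.degree v = d :=
    exists_degree_eq_of_mem (by simp [hG, fourDegrees, Multiset.mem_replicate, hk₁.ne'])
  obtain ⟨l, hl⟩ : ∃ v, G.degree v = d - 1 :=
    exists_degree_eq_of_mem (by simp [hG, fourDegrees, Multiset.mem_replicate, hk₂.ne'])
  have := G.degree_lt_card_verts t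
  refine not_cutRigid (E := d - 2 * (k₁ + k₂)) (by omega) (fun a ha ↦ ?_) (fun b hb ↦ ?_)
    ⟨t, by simp [A]; omega, by omega⟩ ⟨l, by simp [A]; omega, by omega⟩
    ⟨k₁ + k₂, by rw [hA]; linarith⟩
    (cutRigid_of_isSelfCompl hV hmemA (hsc G rfl) fun u v x y h ↦ hsc _ (degMultiset_twoSwitch h))
  · have := (hmemA a).1 ha; have := degree_eq_of_degMultiset_eq_fourDegrees hG a; omega
  · have := (hmemA b).not.1 hb; have := degree_eq_of_degMultiset_eq_fourDegrees hG b; omega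

/-- Let `k1, k2 > 0`, `n = 4(k1 + k2)`, and let `d` satisfy
`d - 1 > n - d`.  If the degree sequence
`(d^{2k1}, (d-1)^{2k2}, (n-d)^{2k2}, (n-1-d)^{2k1})` has at least one realization,
then it has a realization that is not self-complementary. -/
theorem four_degrees_not_forcibly (k1 k2 d : ℕ) (hk1 : 0 < k1) (hk2 : 0 < k2)
    (hd : 4 * (k1 + k2) - d < d - 1) :
    (∃ G : SimpleGraph (Fin (Multiset.card
        (Multiset.replicate (2 * k1) d + Multiset.replicate (2 * k2) (d - 1) +
         Multiset.replicate (2 * k2) (4 * (k1 + k2) - d) +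
         Multiset.replicate (2 * k1) (4 * (k1 + k2) - 1 - d)))),
      degMultiset G =
        Multiset.replicate (2 * k1) d + Multiset.replicate (2 * k2) (d - 1) +
        Multiset.replicate (2 * k2) (4 * (k1 + k2) - d) +
        Multiset.replicate (2 * k1) (4 * (k1 + k2) - 1 - d)) →
    ∃ G : SimpleGraph (Fin (Multiset.card
        (Multiset.replicate (2 * k1) d + Multiset.replicate (2 * k2) (d - 1) +
         Multiset.replicate (2 * k2) (4 * (k1 + k2) - d) +
         Multiset.replicate (2 * k1) (4 * (k1 + k2) - 1 - d)))),
      degMultiset G =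
        Multiset.replicate (2 * k1) d + Multiset.replicate (2 * k2) (d - 1) +
        Multiset.replicate (2 * k2) (4 * (k1 + k2) - d) +
        Multiset.replicate (2 * k1) (4 * (k1 + k2) - 1 - d) ∧
      ¬ IsSelfCompl G := by
  rintro ⟨G, hG⟩
  obtain ⟨G', hG', hnot⟩ := exists_not_isSelfCompl_of_degMultiset_eq_fourDegrees hk1 hk2 hd G hG
  exact ⟨G', hG'.trans hG, hnot⟩
end
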